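/- For the operator G of a finite Markov decision process, (i) for all Q1, Q2 : S×A → ℝ and all y ∈ S×A×S one has p_span(G(Q1,y) − G(Q2,y)) ≤ 2·p_span(Q1 − Q2); and (ii) if |R(s,a)| ≤ 1 for all (s,a), then p_span(G(0,y)) ≤ 1/2 for all y ∈ S×A×S. -/

import Mathlib

/-- The span seminorm of a vector over a finite nonempty index set:
`p_span(x) = (max_i x_i - min_i x_i) / 2`. -/
noncomputable def pspan {I : Type*} [Fintype I] [Nonempty I] (x : I → ℝ) : ℝ :=
  ((⨆ i, x i) - ⨅ i, x i) / 2

/-- The (asynchronous) sample operator `G` of a finite MDP: for `y = (s0, a0, s1)`,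
`[G(Q,y)](s,a) = 1{(s0,a0)=(s,a)}·(R(s0,a0) + max_{a'} Q(s1,a') - Q(s0,a0)) + Q(s,a)`. -/
noncomputable def Gop {S A : Type*} [Nonempty A] [DecidableEq S] [DecidableEq A]
    (R : S × A → ℝ) (Q : S × A → ℝ) (y : S × A × S) : S × A → ℝ :=
  fun sa =>
    (if (y.1, y.2.1) = sa then
        R (y.1, y.2.1) + (⨆ a' : A, Q (y.2.2, a')) - Q (y.1, y.2.1)
      else 0) + Q sa

/-! The sample operator only changes the coordinate `(s0, a0)`, where the new value of
`G(Q1) - G(Q2)` is a difference of maxima, hence lies between the minimum and the maximum of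
`Q1 - Q2`; so `G(·, y)` is in fact `1`-Lipschitz for the span seminorm. -/

section Finite

variable {ι : Type*} [Finite ι] [Nonempty ι]

theorem ciSup_sub_ciSup_le {f g : ι → ℝ} {M : ℝ} (h : ∀ i, f i - g i ≤ M) :
    (⨆ i, f i) - ⨆ i, g i ≤ M := by
  suffices (⨆ i, f i) ≤ (⨆ i, g i) + M by linarith
  refine ciSup_le fun i => ?_
  have := le_ciSup (Finite.bddAbove_range g) i
  linarith [h i]

theorem le_ciSup_sub_ciSup {f g : ι → ℝ} {m : ℝ} (h : ∀ i, m ≤ f i - g i) :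
    m ≤ (⨆ i, f i) - ⨆ i, g i := by
  have := ciSup_sub_ciSup_le (f := g) (g := f) (M := -m) fun i => by linarith [h i]
  linarith

end Finite

section Span

variable {I : Type*} [Fintype I] [Nonempty I]

theorem pspan_le_of_bounds {x : I → ℝ} {m M : ℝ} (hm : ∀ i, m ≤ x i) (hM : ∀ i, x i ≤ M) :
    pspan x ≤ (M - m) / 2 := by
  have := ciSup_le hM
  have := le_ciInf hm
  unfold pspan
  linarith

theorem pspan_nonneg (x : I → ℝ) : 0 ≤ pspan x := by
  have := ciInf_le_ciSup (Finite.bddBelow_range x) (Finite.bddAbove_range x)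
  unfold pspan
  linarith

theorem pspan_le_pspan_of_forall_mem_Icc {J : Type*} [Fintype J] [Nonempty J] {x : J → ℝ}
    {z : I → ℝ} (h : ∀ j, x j ∈ Set.Icc (⨅ i, z i) (⨆ i, z i)) : pspan x ≤ pspan z :=
  pspan_le_of_bounds (fun j => (h j).1) (fun j => (h j).2)

end Span

section SampleOperator

variable {S A : Type*} [Nonempty A] [DecidableEq S] [DecidableEq A]

theorem Gop_sub_Gop_apply (R Q1 Q2 : S × A → ℝ) (y : S × A × S) (sa : S × A) :
    Gop R Q1 y sa - Gop R Q2 y sa =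
      if (y.1, y.2.1) = sa then (⨆ a', Q1 (y.2.2, a')) - ⨆ a', Q2 (y.2.2, a')
      else Q1 sa - Q2 sa := by
  unfold Gop
  split_ifs with h
  · subst h; ring
  · ring

theorem Gop_zero_apply (R : S × A → ℝ) (y : S × A × S) (sa : S × A) :
    Gop R 0 y sa = if (y.1, y.2.1) = sa then R (y.1, y.2.1) else 0 := by
  simp only [Gop, Pi.zero_apply, ciSup_const]
  split_ifs <;> ring

variable [Fintype S] [Fintype A] [Nonempty S]

theorem pspan_Gop_sub_Gop_le (R Q1 Q2 : S × A → ℝ) (y : S × A × S) :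
    pspan (fun sa => Gop R Q1 y sa - Gop R Q2 y sa) ≤ pspan (fun sa => Q1 sa - Q2 sa) := by
  refine pspan_le_pspan_of_forall_mem_Icc fun sa => ?_
  have hlow := ciInf_le (Finite.bddBelow_range fun sa => Q1 sa - Q2 sa)
  have hupp := le_ciSup (Finite.bddAbove_range fun sa => Q1 sa - Q2 sa)
  rw [Gop_sub_Gop_apply]
  split_ifs
  · exact ⟨le_ciSup_sub_ciSup fun a' => hlow _, ciSup_sub_ciSup_le fun a' => hupp _⟩
  · exact ⟨hlow sa, hupp sa⟩

theorem pspan_Gop_zero_le (R : S × A → ℝ) (y : S × A × S) :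
    pspan (Gop R 0 y) ≤ |R (y.1, y.2.1)| / 2 := by
  set r := R (y.1, y.2.1)
  calc pspan (Gop R 0 y) ≤ (max r 0 - min r 0) / 2 := by
        refine pspan_le_of_bounds (fun sa => ?_) (fun sa => ?_) <;>
          rw [Gop_zero_apply] <;> split_ifs <;> simp [r]
    _ = |r| / 2 := by rw [max_sub_min_eq_abs', sub_zero]

end SampleOperator

/-- (i) `G(·,y)` is `2`-Lipschitz in the span seminorm; (ii) if `|R| ≤ 1` then
`p_span(G(0,y)) ≤ 1/2`. -/
theorem Gop_properties {S A : Type*} [Fintype S] [Fintype A] [Nonempty S] [Nonempty A]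
    [DecidableEq S] [DecidableEq A] (R : S × A → ℝ) :
    (∀ (Q1 Q2 : S × A → ℝ) (y : S × A × S),
      pspan (fun sa => Gop (A := A) R Q1 y sa - Gop (A := A) R Q2 y sa)
        ≤ 2 * pspan (fun sa => Q1 sa - Q2 sa)) ∧
    ((∀ sa, |R sa| ≤ 1) → ∀ y : S × A × S,
      pspan (Gop (A := A) R (0 : S × A → ℝ) y) ≤ 1 / 2) := by
  refine ⟨fun Q1 Q2 y => ?_, fun hR y => ?_⟩
  · linarith [pspan_Gop_sub_Gop_le R Q1 Q2 y, pspan_nonneg fun sa => Q1 sa - Q2 sa]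
  · linarith [pspan_Gop_zero_le R y, hR (y.1, y.2.1)]
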